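/- arXiv:2003.11759 — 2 statements merged into one kernel-verified Lean document; each statement's English description precedes it below -/
import Mathlib

section
/- Let n ≥ 2, p > 1, let H be a gauge on ℝ^n that is smooth on ℝ^n \ {0}, set Ĥ(ξ) = H(−ξ) and V(ξ) = Ĥ(ξ)^p/p. Let Ω ⊆ ℝ^n be open and let v ∈ C³(Ω) satisfy v(x) > 0 and ∇v(x) ≠ 0 for every x ∈ Ω. Define the matrix field W(x) with entries W_{ij}(x) = ∂_j[(∇_ξ V)(∇v)]_i(x) (the Jacobian of x ↦ ∇_ξV(∇v(x))), the anisotropic p-Laplacian Δ_p^Ĥ v = div(Ĥ(∇v)^{p−1}∇Ĥ(∇v)) = tr W, and S²(W) = ½((tr W)² − tr(W²)), S²_{ij}(W) = −W_{ji} + δ_{ij} tr W. Then the following pointwise differential identity holds on Ω: 2v^{1−n}S²(W) + (n−1)np(p−1)v^{−n−1}V(∇v)² + (1−n)(2p−1)v^{−n}V(∇v)Δ_p^Ĥ v = div( v^{1−n} X + (1−n)(p−1)v^{−n}V(∇v)∇_ξV(∇v) ), where X is the vector field with components X_j = Σ_i S²_{ij}(W)(∇_ξ V)_i(∇v). -/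
/-!
Write `u = ∇_ξV(∇v)` and `W = Du`. The field `X = (tr W) u - W u` satisfies
`div X = (tr W)² - tr (W²) = 2 S²(W)`, because the rows of the Newton tensor `(tr W) I - Wᵀ` are
divergence free by the symmetry of the second derivatives of `u`. The remaining terms of `div Y`
come from differentiating the weights `v^{1-n}` and `v^{-n} V(∇v)`, and they collapse by the Euler
identities of the `p`-homogeneous `V`: `⟨∇V(ξ), ξ⟩ = p V(ξ)`, and, since `D²V(ξ) ξ = (p-1) ∇V(ξ)`
with `D²V` symmetric, `Wᵀ ∇v = (p-1) ∇(V(∇v))`.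
-/

section Homogeneous

variable {E F : Type*} [NormedAddCommGroup E] [NormedSpace ℝ E]
  [NormedAddCommGroup F] [NormedSpace ℝ F] {f : E → F} {r : ℝ}

theorem fderiv_apply_self_of_homogeneous {x : E}
    (hf : ∀ t : ℝ, 0 < t → f (t • x) = t ^ r • f x) (hd : DifferentiableAt ℝ f x) :
    fderiv ℝ f x x = r • f x := by
  have hd' : HasFDerivAt f (fderiv ℝ f x) ((1 : ℝ) • x) := by simpa using hd.hasFDerivAt
  have hray : HasDerivAt (fun t : ℝ => f (t • x)) (fderiv ℝ f x x) 1 :=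
    hd'.comp_hasDerivAt 1 (by simpa using (hasDerivAt_id (1 : ℝ)).smul_const x)
  have hpow : HasDerivAt (fun t : ℝ => t ^ r • f x) (r • f x) 1 := by
    simpa using (Real.hasDerivAt_rpow_const (p := r) (Or.inl one_ne_zero)).smul_const (f x)
  refine (hray.congr_of_eventuallyEq ?_).unique hpow
  filter_upwards [eventually_gt_nhds zero_lt_one] with t ht using (hf t ht).symm

theorem fderiv_smul_of_homogeneous (hf : ∀ t : ℝ, 0 < t → ∀ y, f (t • y) = t ^ r • f y)
    {t : ℝ} (ht : 0 < t) (x : E) :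
    fderiv ℝ f (t • x) = t ^ (r - 1) • fderiv ℝ f x := by
  have h := fderiv_comp_smul (f := f) (x := x) t
  rw [show (fun y => f (t • y)) = t ^ r • f from funext (hf t ht), fderiv_const_smul_field,
    Pi.smul_apply] at h
  rw [Real.rpow_sub_one ht.ne', div_eq_inv_mul, mul_smul, h, smul_smul, inv_mul_cancel₀ ht.ne',
    one_smul]

theorem fderiv_fderiv_apply_self_of_homogeneous {V : E → ℝ} {ξ : E}
    (hV : ∀ t : ℝ, 0 < t → ∀ y, V (t • y) = t ^ r * V y)
    (hd : DifferentiableAt ℝ (fderiv ℝ V) ξ) :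
    fderiv ℝ (fderiv ℝ V) ξ ξ = (r - 1) • fderiv ℝ V ξ :=
  fderiv_apply_self_of_homogeneous (fun _ ht => fderiv_smul_of_homogeneous hV ht ξ) hd

end Homogeneous

section InnerProduct

variable {E : Type*} [NormedAddCommGroup E] [InnerProductSpace ℝ E] [CompleteSpace E]
  {V : E → ℝ} {r : ℝ}

open InnerProductSpace

theorem inner_gradient_self_of_homogeneous {ξ : E}
    (hV : ∀ t : ℝ, 0 < t → ∀ y, V (t • y) = t ^ r * V y) (hd : DifferentiableAt ℝ V ξ) :
    inner ℝ (gradient V ξ) ξ = r * V ξ := by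
  rw [inner_gradient_left]
  exact fderiv_apply_self_of_homogeneous (fun t ht => hV t ht ξ) hd

theorem inner_fderiv_gradient_self_of_homogeneous {ξ : E}
    (hV : ∀ t : ℝ, 0 < t → ∀ y, V (t • y) = t ^ r * V y) (h2 : ContDiffAt ℝ 2 V ξ) (h : E) :
    inner ℝ (fderiv ℝ (gradient V) ξ h) ξ = (r - 1) * fderiv ℝ V ξ h := by
  have hd : DifferentiableAt ℝ (fderiv ℝ V) ξ :=
    (h2.fderiv_right (m := 1) le_rfl).differentiableAt one_ne_zero
  have hgrad : gradient V = (toDual ℝ E).symm ∘ fderiv ℝ V := rfl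
  rw [hgrad, LinearIsometryEquiv.comp_fderiv, ContinuousLinearMap.comp_apply]
  simp only [ContinuousLinearEquiv.coe_coe, LinearIsometryEquiv.coe_toContinuousLinearEquiv]
  rw [toDual_symm_apply, (h2.isSymmSndFDerivAt (by simp)) h ξ,
    fderiv_fderiv_apply_self_of_homogeneous hV hd]
  rfl

theorem contDiffAt_gradient {f : E → ℝ} {x : E} {k m : WithTop ℕ∞} (hf : ContDiffAt ℝ k f x)
    (hmk : m + 1 ≤ k) : ContDiffAt ℝ m (gradient f) x :=
  (toDual ℝ E).symm.contDiff.contDiffAt.comp x (hf.fderiv_right hmk)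

end InnerProduct

section Gauge

variable {E : Type*} [NormedAddCommGroup E] [NormedSpace ℝ E] {H : E → ℝ}

theorem apply_nonneg_of_homogeneous (hH_hom : ∀ t : ℝ, 0 < t → ∀ ξ : E, H (t • ξ) = t * H ξ)
    (hH_pos : ∀ ξ : E, ξ ≠ 0 → 0 < H ξ) (ξ : E) : 0 ≤ H ξ := by
  rcases eq_or_ne ξ 0 with rfl | hξ
  · have h := hH_hom 2 two_pos 0
    rw [smul_zero] at h
    linarith
  · exact (hH_pos ξ hξ).le

theorem homogeneous_rpow_comp_neg (hH_hom : ∀ t : ℝ, 0 < t → ∀ ξ : E, H (t • ξ) = t * H ξ)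
    (hH_pos : ∀ ξ : E, ξ ≠ 0 → 0 < H ξ) (p : ℝ) (t : ℝ) (ht : 0 < t) (ξ : E) :
    H (-(t • ξ)) ^ p / p = t ^ p * (H (-ξ) ^ p / p) := by
  rw [← smul_neg, hH_hom t ht, Real.mul_rpow ht.le (apply_nonneg_of_homogeneous hH_hom hH_pos _),
    mul_div_assoc]

theorem contDiffAt_rpow_comp_neg {k : WithTop ℕ∞} (hH_pos : ∀ ξ : E, ξ ≠ 0 → 0 < H ξ)
    (hH_smooth : ContDiffOn ℝ k H {0}ᶜ) {ξ : E} (hξ : ξ ≠ 0) (p : ℝ) :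
    ContDiffAt ℝ k (fun ξ => H (-ξ) ^ p / p) ξ := by
  have hneg : -ξ ≠ 0 := neg_ne_zero.2 hξ
  have hH : ContDiffAt ℝ k H (-ξ) := hH_smooth.contDiffAt (isOpen_compl_singleton.mem_nhds hneg)
  exact ((hH.comp ξ contDiff_neg.contDiffAt).rpow_const_of_ne (hH_pos _ hneg).ne').div_const p

end Gauge

section PartialDeriv

variable {ι : Type*} [Fintype ι] [DecidableEq ι] {f g : EuclideanSpace ℝ ι → ℝ}
  {x : EuclideanSpace ℝ ι}

noncomputable def partialDeriv (j : ι) (f : EuclideanSpace ℝ ι → ℝ) (x : EuclideanSpace ℝ ι) :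
    ℝ :=
  fderiv ℝ f x (EuclideanSpace.single j 1)

theorem partialDeriv_add (hf : DifferentiableAt ℝ f x) (hg : DifferentiableAt ℝ g x) (j : ι) :
    partialDeriv j (fun y => f y + g y) x = partialDeriv j f x + partialDeriv j g x := by
  simp [partialDeriv, fderiv_fun_add hf hg]

theorem partialDeriv_sub (hf : DifferentiableAt ℝ f x) (hg : DifferentiableAt ℝ g x) (j : ι) :
    partialDeriv j (fun y => f y - g y) x = partialDeriv j f x - partialDeriv j g x := by
  simp [partialDeriv, fderiv_fun_sub hf hg]

theorem partialDeriv_mul (hf : DifferentiableAt ℝ f x) (hg : DifferentiableAt ℝ g x) (j : ι) :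
    partialDeriv j (fun y => f y * g y) x =
      partialDeriv j f x * g x + f x * partialDeriv j g x := by
  simp [partialDeriv, fderiv_fun_mul hf hg]
  ring

theorem partialDeriv_const_mul (c : ℝ) (j : ι) :
    partialDeriv j (fun y => c * f y) x = c * partialDeriv j f x := by
  rw [partialDeriv, show (fun y => c * f y) = c • f from rfl, fderiv_const_smul_field]
  rfl

theorem partialDeriv_sum {κ : Type*} (s : Finset κ) {F : κ → EuclideanSpace ℝ ι → ℝ}
    (hF : ∀ k ∈ s, DifferentiableAt ℝ (F k) x) (j : ι) :
    partialDeriv j (fun y => ∑ k ∈ s, F k y) x = ∑ k ∈ s, partialDeriv j (F k) x := by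
  simp [partialDeriv, fderiv_fun_sum hF]

theorem partialDeriv_rpow_const (hf : DifferentiableAt ℝ f x) (hx : f x ≠ 0) (r : ℝ) (j : ι) :
    partialDeriv j (fun y => f y ^ r) x = r * f x ^ (r - 1) * partialDeriv j f x := by
  simp [partialDeriv, (hf.hasFDerivAt.rpow_const (Or.inl hx)).fderiv]

theorem partialDeriv_eq_gradient_apply (j : ι) (f : EuclideanSpace ℝ ι → ℝ) (x) :
    partialDeriv j f x = gradient f x j := by
  rw [partialDeriv, ← inner_gradient_left, EuclideanSpace.inner_single_right]
  simp

theorem differentiableAt_partialDeriv (hf : ContDiffAt ℝ 2 f x) (j : ι) :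
    DifferentiableAt ℝ (partialDeriv j f) x :=
  ((hf.fderiv_right (m := 1) le_rfl).differentiableAt one_ne_zero).clm_apply
    (differentiableAt_const _)

theorem partialDeriv_comm (hf : ContDiffAt ℝ 2 f x) (i j : ι) :
    partialDeriv i (partialDeriv j f) x = partialDeriv j (partialDeriv i f) x := by
  have hd := (hf.fderiv_right (m := 1) le_rfl).differentiableAt one_ne_zero
  change fderiv ℝ (fun y => fderiv ℝ f y _) x _ = fderiv ℝ (fun y => fderiv ℝ f y _) x _
  rw [fderiv_clm_apply hd (differentiableAt_const _),
    fderiv_clm_apply hd (differentiableAt_const _)]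
  simpa using hf.isSymmSndFDerivAt (by simp) _ _

theorem partialDeriv_apply_of_differentiableAt {u : EuclideanSpace ℝ ι → EuclideanSpace ℝ ι}
    (hu : DifferentiableAt ℝ u x) (i j : ι) :
    partialDeriv j (fun y => u y i) x = fderiv ℝ u x (EuclideanSpace.single j 1) i := by
  have h : HasFDerivAt (fun y => u y i) (EuclideanSpace.proj i ∘L fderiv ℝ u x) x :=
    (EuclideanSpace.proj (𝕜 := ℝ) i).hasFDerivAt.comp x hu.hasFDerivAt
  simp [partialDeriv, h.fderiv]

noncomputable def divergence (Y : EuclideanSpace ℝ ι → ι → ℝ) (x : EuclideanSpace ℝ ι) : ℝ :=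
  ∑ j, partialDeriv j (fun y => Y y j) x

noncomputable def jacobianMatrix (u : EuclideanSpace ℝ ι → EuclideanSpace ℝ ι)
    (x : EuclideanSpace ℝ ι) : Matrix ι ι ℝ :=
  Matrix.of fun i j => partialDeriv j (fun y => u y i) x

theorem divergence_eq_trace_jacobianMatrix (u : EuclideanSpace ℝ ι → EuclideanSpace ℝ ι) (x) :
    divergence (fun y j => u y j) x = (jacobianMatrix u x).trace :=
  rfl

variable {A B : EuclideanSpace ℝ ι → ι → ℝ}

theorem divergence_add (hA : ∀ j, DifferentiableAt ℝ (fun y => A y j) x)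
    (hB : ∀ j, DifferentiableAt ℝ (fun y => B y j) x) :
    divergence (fun y j => A y j + B y j) x = divergence A x + divergence B x := by
  simp only [divergence, partialDeriv_add (hA _) (hB _), Finset.sum_add_distrib]

theorem divergence_mul (hf : DifferentiableAt ℝ f x)
    (hA : ∀ j, DifferentiableAt ℝ (fun y => A y j) x) :
    divergence (fun y j => f y * A y j) x =
      ∑ j, partialDeriv j f x * A x j + f x * divergence A x := by
  simp only [divergence, partialDeriv_mul hf (hA _), Finset.sum_add_distrib, Finset.mul_sum]

theorem Matrix.sum_neg_add_ite_trace_mul (A : Matrix ι ι ℝ) (b : ι → ℝ) (j : ι) :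
    ∑ i, (-A j i + if i = j then A.trace else 0) * b i = A.trace * b j - ∑ i, A j i * b i := by
  simp [add_mul, Finset.sum_add_distrib, ite_mul]
  ring

section JacobianMatrix

variable {u : EuclideanSpace ℝ ι → EuclideanSpace ℝ ι} (hu : ContDiffAt ℝ 2 u x)
include hu

omit [DecidableEq ι] in
theorem ContDiffAt.differentiableAt_apply (i : ι) : DifferentiableAt ℝ (fun y => u y i) x :=
  (differentiableAt_piLp 2).1 (hu.differentiableAt two_ne_zero) i

theorem ContDiffAt.differentiableAt_jacobianMatrix (i j : ι) :
    DifferentiableAt ℝ (fun y => jacobianMatrix u y i j) x :=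
  differentiableAt_partialDeriv ((EuclideanSpace.proj (𝕜 := ℝ) i).contDiff.contDiffAt.comp x hu) j

theorem ContDiffAt.differentiableAt_trace_jacobianMatrix :
    DifferentiableAt ℝ (fun y => (jacobianMatrix u y).trace) x :=
  DifferentiableAt.fun_sum fun k _ => hu.differentiableAt_jacobianMatrix k k

theorem divergence_trace_mul_sub_jacobianMatrix_mul :
    divergence (fun y j => (jacobianMatrix u y).trace * u y j -
        ∑ i, jacobianMatrix u y j i * u y i) x =
      (jacobianMatrix u x).trace ^ 2 - (jacobianMatrix u x * jacobianMatrix u x).trace := by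
  have hu1 := hu.differentiableAt_apply
  have hJ := hu.differentiableAt_jacobianMatrix
  have htr := hu.differentiableAt_trace_jacobianMatrix
  have hsym : ∀ i j, partialDeriv j (fun y => jacobianMatrix u y j i) x =
      partialDeriv i (fun y => jacobianMatrix u y j j) x := fun i j =>
    partialDeriv_comm ((EuclideanSpace.proj (𝕜 := ℝ) j).contDiff.contDiffAt.comp x hu) j i
  have hterm : ∀ j, partialDeriv j (fun y => (jacobianMatrix u y).trace * u y j -
        ∑ i, jacobianMatrix u y j i * u y i) x =
      (∑ k, partialDeriv j (fun y => jacobianMatrix u y k k) x) * u x j +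
        (jacobianMatrix u x).trace * jacobianMatrix u x j j -
        ∑ i, (partialDeriv i (fun y => jacobianMatrix u y j j) x * u x i +
          jacobianMatrix u x j i * jacobianMatrix u x i j) := by
    intro j
    rw [partialDeriv_sub (htr.fun_mul (hu1 j))
        (DifferentiableAt.fun_sum fun i _ => (hJ j i).fun_mul (hu1 i)),
      partialDeriv_mul htr (hu1 j), partialDeriv_sum _ fun i _ => (hJ j i).fun_mul (hu1 i)]
    simp only [partialDeriv_mul (hJ _ _) (hu1 _), hsym]
    rw [show partialDeriv j (fun y => (jacobianMatrix u y).trace) x =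
      ∑ k, partialDeriv j (fun y => jacobianMatrix u y k k) x from
        partialDeriv_sum _ (fun k _ => hJ k k) j]
    rfl
  simp only [divergence, hterm, Finset.sum_sub_distrib, Finset.sum_add_distrib, Finset.sum_mul]
  rw [Finset.sum_comm (f := fun j i => partialDeriv i (fun y => jacobianMatrix u y j j) x * u x i)]
  simp only [Matrix.trace, Matrix.diag, Matrix.mul_apply, ← Finset.mul_sum]
  ring

theorem divergence_bianchiniCiraolo {v P : EuclideanSpace ℝ ι → ℝ} {n p : ℝ}
    (hv : DifferentiableAt ℝ v x) (hvx : v x ≠ 0) (hP : DifferentiableAt ℝ P x)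
    (hEuler : ∑ i, u x i * gradient v x i = p * P x)
    (hJ : ∀ i, ∑ j, jacobianMatrix u x j i * gradient v x j = (p - 1) * partialDeriv i P x) :
    divergence (fun y j => v y ^ (1 - n) *
        (∑ i, (-jacobianMatrix u y j i + if i = j then (jacobianMatrix u y).trace else 0) * u y i) +
        (1 - n) * (p - 1) * v y ^ (-n) * P y * u y j) x =
      2 * v x ^ (1 - n) * (((jacobianMatrix u x).trace ^ 2 -
          (jacobianMatrix u x * jacobianMatrix u x).trace) / 2) +
        (n - 1) * n * p * (p - 1) * v x ^ (-n - 1) * P x ^ 2 +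
        (1 - n) * (2 * p - 1) * v x ^ (-n) * P x * (jacobianMatrix u x).trace := by
  simp only [Matrix.sum_neg_add_ite_trace_mul, ← partialDeriv_eq_gradient_apply] at hEuler hJ ⊢
  have hu1 := hu.differentiableAt_apply
  have hXd : ∀ j, DifferentiableAt ℝ (fun y => (jacobianMatrix u y).trace * u y j -
      ∑ i, jacobianMatrix u y j i * u y i) x := fun j =>
    (hu.differentiableAt_trace_jacobianMatrix.fun_mul (hu1 j)).fun_sub
      (DifferentiableAt.fun_sum fun i _ => (hu.differentiableAt_jacobianMatrix j i).fun_mul (hu1 i))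
  have hf : DifferentiableAt ℝ (fun y => v y ^ (1 - n)) x := hv.rpow_const (Or.inl hvx)
  have hg' : DifferentiableAt ℝ (fun y => v y ^ (-n)) x := hv.rpow_const (Or.inl hvx)
  have hg : DifferentiableAt ℝ (fun y => (1 - n) * (p - 1) * v y ^ (-n) * P y) x :=
    (hg'.const_mul _).fun_mul hP
  rw [divergence_add (fun j => hf.fun_mul (hXd j)) (fun j => hg.fun_mul (hu1 j)),
    divergence_mul hf hXd, divergence_mul hg hu1, divergence_trace_mul_sub_jacobianMatrix_mul hu,
    divergence_eq_trace_jacobianMatrix]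
  have hJu : ∑ j, partialDeriv j v x * ∑ i, jacobianMatrix u x j i * u x i =
      (p - 1) * ∑ i, partialDeriv i P x * u x i := by
    simp only [Finset.mul_sum]
    rw [Finset.sum_comm]
    refine Finset.sum_congr rfl fun i _ => ?_
    rw [← mul_assoc, ← hJ i, Finset.sum_mul]
    exact Finset.sum_congr rfl fun j _ => by ring
  have hX_term : ∑ j, partialDeriv j (fun y => v y ^ (1 - n)) x *
        ((jacobianMatrix u x).trace * u x j - ∑ i, jacobianMatrix u x j i * u x i) =
      (1 - n) * v x ^ (-n) * ((jacobianMatrix u x).trace * (p * P x) -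
        (p - 1) * ∑ i, partialDeriv i P x * u x i) := by
    rw [← hEuler, ← hJu, Finset.mul_sum, ← Finset.sum_sub_distrib, Finset.mul_sum]
    refine Finset.sum_congr rfl fun j _ => ?_
    rw [partialDeriv_rpow_const hv hvx, show 1 - n - 1 = -n by ring]
    ring
  have hu_term : ∑ j, partialDeriv j (fun y => (1 - n) * (p - 1) * v y ^ (-n) * P y) x * u x j =
      (1 - n) * (p - 1) * (-n * v x ^ (-n - 1) * P x * (p * P x) +
        v x ^ (-n) * ∑ j, partialDeriv j P x * u x j) := by
    rw [← hEuler, Finset.mul_sum, Finset.mul_sum, ← Finset.sum_add_distrib, Finset.mul_sum]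
    refine Finset.sum_congr rfl fun j _ => ?_
    rw [partialDeriv_mul (hg'.const_mul _) hP, partialDeriv_const_mul,
      partialDeriv_rpow_const hv hvx]
    ring
  rw [hX_term, hu_term]
  ring

end JacobianMatrix

omit [DecidableEq ι] in
theorem sum_mul_eq_inner (a b : EuclideanSpace ℝ ι) : ∑ j, a j * b j = inner ℝ a b := by
  simp [PiLp.inner_apply, mul_comm]

omit [DecidableEq ι] in
theorem sum_gradient_mul_of_homogeneous {V : EuclideanSpace ℝ ι → ℝ} {r : ℝ}
    (hV : ∀ t : ℝ, 0 < t → ∀ y, V (t • y) = t ^ r * V y) {ξ : EuclideanSpace ℝ ι}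
    (hd : DifferentiableAt ℝ V ξ) :
    ∑ i, gradient V ξ i * ξ i = r * V ξ := by
  rw [sum_mul_eq_inner, inner_gradient_self_of_homogeneous hV hd]

theorem sum_jacobianMatrix_gradient_mul_of_homogeneous {V : EuclideanSpace ℝ ι → ℝ} {r : ℝ}
    {g : EuclideanSpace ℝ ι → EuclideanSpace ℝ ι}
    (hV : ∀ t : ℝ, 0 < t → ∀ y, V (t • y) = t ^ r * V y) (hV2 : ContDiffAt ℝ 3 V (g x))
    (hg : DifferentiableAt ℝ g x) (i : ι) :
    ∑ j, jacobianMatrix (fun y => gradient V (g y)) x j i * g x j =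
      (r - 1) * partialDeriv i (fun y => V (g y)) x := by
  have hgrad : DifferentiableAt ℝ (gradient V) (g x) :=
    (contDiffAt_gradient hV2 (m := 2) (by norm_num)).differentiableAt two_ne_zero
  have hV1 : DifferentiableAt ℝ V (g x) := hV2.differentiableAt (by norm_num)
  have hcoord : ∀ j, jacobianMatrix (fun y => gradient V (g y)) x j i =
      fderiv ℝ (fun y => gradient V (g y)) x (EuclideanSpace.single i 1) j := fun j =>
    partialDeriv_apply_of_differentiableAt (hgrad.comp x hg) j i
  simp only [hcoord]
  rw [sum_mul_eq_inner, fderiv_fun_comp x hgrad hg, ContinuousLinearMap.comp_apply,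
    inner_fderiv_gradient_self_of_homogeneous hV (hV2.of_le (by norm_num)), partialDeriv,
    fderiv_fun_comp x hV1 hg, ContinuousLinearMap.comp_apply]

end PartialDeriv

theorem stmt_8_general
    (n : ℕ) (p : ℝ)
    -- the gauge H, smooth away from the origin
    (H : EuclideanSpace ℝ (Fin n) → ℝ)
    (hH_hom : ∀ t : ℝ, 0 < t → ∀ ξ : EuclideanSpace ℝ (Fin n), H (t • ξ) = t * H ξ)
    (hH_pos : ∀ ξ : EuclideanSpace ℝ (Fin n), ξ ≠ 0 → 0 < H ξ)
    (hH_smooth : ContDiffOn ℝ (⊤ : ℕ∞) H {(0 : EuclideanSpace ℝ (Fin n))}ᶜ)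
    -- V(ξ) = Ĥ(ξ)^p / p, Ĥ(ξ) = H(-ξ)
    (V : EuclideanSpace ℝ (Fin n) → ℝ)
    (hV : ∀ ξ : EuclideanSpace ℝ (Fin n), V ξ = H (-ξ) ^ p / p)
    -- the open set and the function v
    (Ω : Set (EuclideanSpace ℝ (Fin n))) (hΩ_open : IsOpen Ω)
    (v : EuclideanSpace ℝ (Fin n) → ℝ) (hv : ContDiffOn ℝ 3 v Ω)
    (hv_pos : ∀ x ∈ Ω, 0 < v x)
    (hv_grad : ∀ x ∈ Ω, gradient v x ≠ 0)
    -- W is the Jacobian matrix of x ↦ ∇_ξ V(∇v(x))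
    (W : EuclideanSpace ℝ (Fin n) → Matrix (Fin n) (Fin n) ℝ)
    (hW : ∀ x : EuclideanSpace ℝ (Fin n), ∀ i j : Fin n,
      W x i j = fderiv ℝ (fun y => gradient V (gradient v y) i) x (EuclideanSpace.single j 1))
    -- Y is the vector field v^{1-n} X + (1-n)(p-1) v^{-n} V(∇v) ∇_ξ V(∇v)
    (Y : EuclideanSpace ℝ (Fin n) → Fin n → ℝ)
    (hY : ∀ x : EuclideanSpace ℝ (Fin n), ∀ j : Fin n,
      Y x j = v x ^ (1 - (n : ℝ)) *
          (∑ i : Fin n, (-(W x j i) + (if i = j then (W x).trace else 0)) *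
            gradient V (gradient v x) i) +
        (1 - (n : ℝ)) * (p - 1) * v x ^ (-(n : ℝ)) * V (gradient v x) *
          gradient V (gradient v x) j) :
    ∀ x ∈ Ω,
      2 * v x ^ (1 - (n : ℝ)) * (((W x).trace ^ 2 - (W x * W x).trace) / 2) +
          ((n : ℝ) - 1) * (n : ℝ) * p * (p - 1) * v x ^ (-(n : ℝ) - 1) *
            V (gradient v x) ^ 2 +
          (1 - (n : ℝ)) * (2 * p - 1) * v x ^ (-(n : ℝ)) * V (gradient v x) * (W x).trace =
        ∑ j : Fin n, fderiv ℝ (fun y => Y y j) x (EuclideanSpace.single j 1) := by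
  intro x hx
  obtain rfl : W = jacobianMatrix (fun y => gradient V (gradient v y)) :=
    funext fun y => Matrix.ext (hW y)
  obtain rfl := funext fun y => funext (hY y)
  have hV_hom : ∀ t : ℝ, 0 < t → ∀ ξ, V (t • ξ) = t ^ p * V ξ := by
    simpa only [hV] using homogeneous_rpow_comp_neg hH_hom hH_pos p
  have hvC : ContDiffAt ℝ 3 v x := hv.contDiffAt (hΩ_open.mem_nhds hx)
  have hVC : ContDiffAt ℝ 3 V (gradient v x) := by
    rw [funext hV]
    exact (contDiffAt_rpow_comp_neg hH_pos hH_smooth (hv_grad x hx) p).of_le (by norm_cast)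
  have hgv : ContDiffAt ℝ 2 (gradient v) x := contDiffAt_gradient hvC (by norm_num)
  have hgvd : DifferentiableAt ℝ (gradient v) x := hgv.differentiableAt two_ne_zero
  have hu : ContDiffAt ℝ 2 (fun y => gradient V (gradient v y)) x :=
    (contDiffAt_gradient hVC (by norm_num)).comp x hgv
  have hP : DifferentiableAt ℝ (fun y => V (gradient v y)) x :=
    (hVC.differentiableAt (by norm_num)).comp x hgvd
  exact (divergence_bianchiniCiraolo hu (hvC.differentiableAt (by norm_num)) (hv_pos x hx).ne' hP
    (sum_gradient_mul_of_homogeneous hV_hom (hVC.differentiableAt (by norm_num)))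
    (sum_jacobianMatrix_gradient_mul_of_homogeneous hV_hom hVC hgvd)).symm

/-- The pointwise differential identity of Bianchini–Ciraolo:
for `v ∈ C³(Ω)` positive with nonvanishing gradient, `V(ξ) = Ĥ(ξ)^p/p` with `Ĥ(ξ) = H(-ξ)`,
`W = D(∇_ξV(∇v))`, `Δ_p^Ĥ v = tr W`, `S²(W) = ½((tr W)² - tr(W²))`,
`S²_{ij}(W) = -W_{ji} + δ_{ij} tr W`, one has on `Ω`:
`2 v^{1-n} S²(W) + (n-1)np(p-1) v^{-n-1} V(∇v)² + (1-n)(2p-1) v^{-n} V(∇v) Δ_p^Ĥ v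
  = div( v^{1-n} X + (1-n)(p-1) v^{-n} V(∇v) ∇_ξV(∇v) )`,
where `X_j = Σᵢ S²_{ij}(W) (∇_ξV)ᵢ(∇v)`. -/
theorem stmt_8
    (n : ℕ) (hn : 2 ≤ n) (p : ℝ) (hp : 1 < p)
    -- the gauge H, smooth away from the origin
    (H : EuclideanSpace ℝ (Fin n) → ℝ)
    (hH_conv : ConvexOn ℝ Set.univ H)
    (hH_hom : ∀ t : ℝ, 0 < t → ∀ ξ : EuclideanSpace ℝ (Fin n), H (t • ξ) = t * H ξ)
    (hH_pos : ∀ ξ : EuclideanSpace ℝ (Fin n), ξ ≠ 0 → 0 < H ξ)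
    (hH_smooth : ContDiffOn ℝ (⊤ : ℕ∞) H {(0 : EuclideanSpace ℝ (Fin n))}ᶜ)
    -- V(ξ) = Ĥ(ξ)^p / p, Ĥ(ξ) = H(-ξ)
    (V : EuclideanSpace ℝ (Fin n) → ℝ)
    (hV : ∀ ξ : EuclideanSpace ℝ (Fin n), V ξ = H (-ξ) ^ p / p)
    -- the open set and the function v
    (Ω : Set (EuclideanSpace ℝ (Fin n))) (hΩ_open : IsOpen Ω)
    (v : EuclideanSpace ℝ (Fin n) → ℝ) (hv : ContDiffOn ℝ 3 v Ω)
    (hv_pos : ∀ x ∈ Ω, 0 < v x)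
    (hv_grad : ∀ x ∈ Ω, gradient v x ≠ 0)
    -- W is the Jacobian matrix of x ↦ ∇_ξ V(∇v(x))
    (W : EuclideanSpace ℝ (Fin n) → Matrix (Fin n) (Fin n) ℝ)
    (hW : ∀ x : EuclideanSpace ℝ (Fin n), ∀ i j : Fin n,
      W x i j = fderiv ℝ (fun y => gradient V (gradient v y) i) x (EuclideanSpace.single j 1))
    -- Y is the vector field v^{1-n} X + (1-n)(p-1) v^{-n} V(∇v) ∇_ξ V(∇v)
    (Y : EuclideanSpace ℝ (Fin n) → Fin n → ℝ)
    (hY : ∀ x : EuclideanSpace ℝ (Fin n), ∀ j : Fin n,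
      Y x j = v x ^ (1 - (n : ℝ)) *
          (∑ i : Fin n, (-(W x j i) + (if i = j then (W x).trace else 0)) *
            gradient V (gradient v x) i) +
        (1 - (n : ℝ)) * (p - 1) * v x ^ (-(n : ℝ)) * V (gradient v x) *
          gradient V (gradient v x) j) :
    ∀ x ∈ Ω,
      2 * v x ^ (1 - (n : ℝ)) * (((W x).trace ^ 2 - (W x * W x).trace) / 2) +
          ((n : ℝ) - 1) * (n : ℝ) * p * (p - 1) * v x ^ (-(n : ℝ) - 1) *
            V (gradient v x) ^ 2 +
          (1 - (n : ℝ)) * (2 * p - 1) * v x ^ (-(n : ℝ)) * V (gradient v x) * (W x).trace =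
        ∑ j : Fin n, fderiv ℝ (fun y => Y y j) x (EuclideanSpace.single j 1) :=
  stmt_8_general n p H hH_hom hH_pos hH_smooth V hV Ω hΩ_open v hv hv_pos hv_grad W hW Y hY
end

section
/- Let n ≥ 2, let U ⊆ ℝ^n be a connected open set, let g : U → ℝ^n be of class C², and let λ : U → ℝ be a function such that the Jacobian matrix of g satisfies Dg(x) = λ(x)·Id for every x ∈ U (that is, ∂_j g_i(x) = λ(x)δ_{ij} for all i, j). Then λ is constant on U, and there exists c ∈ ℝ^n such that g(x) = λx + c for all x ∈ U. -/
open Filter Topology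

theorem LinearMap.eq_zero_of_smul_comm {K V : Type*} [Field K] [AddCommGroup V] [Module K V]
    (hV : 1 < Module.rank K V) (ℓ : V →ₗ[K] K) (hℓ : ∀ v w, ℓ v • w = ℓ w • v) : ℓ = 0 := by
  ext v
  rcases eq_or_ne v 0 with rfl | hv
  · simp
  obtain ⟨w, hvw⟩ := exists_linearIndependent_pair_of_one_lt_rank hV hv
  have hcomb : ℓ w • v + (-ℓ v) • w = 0 := by rw [neg_smul, hℓ v w, add_neg_cancel]
  simpa using (LinearIndependent.pair_iff.1 hvw _ _ hcomb).2

section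

variable {𝕜 E F : Type*} [RCLike 𝕜] [NormedAddCommGroup E] [NormedSpace 𝕜 E]
  [NormedAddCommGroup F] [NormedSpace 𝕜 F]

theorem DifferentiableAt.of_smul_id [Nontrivial E] {lam : F → 𝕜} {x : F}
    (h : DifferentiableAt 𝕜 (fun y ↦ lam y • ContinuousLinearMap.id 𝕜 E) x) :
    DifferentiableAt 𝕜 lam x := by
  obtain ⟨e, he⟩ := exists_ne (0 : E)
  obtain ⟨f, hfe⟩ := SeparatingDual.exists_eq_one (R := 𝕜) he
  have hφ : DifferentiableAt 𝕜 (fun y ↦ f ((lam y • ContinuousLinearMap.id 𝕜 E) e)) x :=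
    (f.comp (ContinuousLinearMap.apply 𝕜 E e)).differentiableAt.comp x h
  simpa [hfe] using hφ

/-- The second derivative of `g` at `x` is `v w ↦ Dlam(x) v • w`; its symmetry forces
`Dlam(x) = 0` once `E` has two independent directions. -/
theorem fderiv_eq_zero_of_hasFDerivAt_smul_id (hE : 1 < Module.rank 𝕜 E) {g : E → E}
    {lam : E → 𝕜} {x : E}
    (hg : ∀ᶠ y in 𝓝 x, HasFDerivAt g (lam y • ContinuousLinearMap.id 𝕜 E) y)
    (hlam : DifferentiableAt 𝕜 lam x) : fderiv 𝕜 lam x = 0 := by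
  have hsymm (v w : E) : fderiv 𝕜 lam x v • w = fderiv 𝕜 lam x w • v := by
    simpa using second_derivative_symmetric_of_eventually hg
      (hlam.hasFDerivAt.smul_const (ContinuousLinearMap.id 𝕜 E)) v w
  exact ContinuousLinearMap.coe_injective
    (LinearMap.eq_zero_of_smul_comm hE (fderiv 𝕜 lam x) hsymm)

end

/-- If `g : U → ℝⁿ` is `C²` on a connected open set `U ⊆ ℝⁿ` and its
Jacobian satisfies `Dg(x) = λ(x)·Id` on `U`, then `λ` is constant on `U` and
`g(x) = λx + c` on `U` for some `c ∈ ℝⁿ`. -/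
theorem stmt_12
    (n : ℕ) (hn : 2 ≤ n)
    (U : Set (EuclideanSpace ℝ (Fin n))) (hU_open : IsOpen U) (hU_conn : IsConnected U)
    (g : EuclideanSpace ℝ (Fin n) → EuclideanSpace ℝ (Fin n))
    (hg : ContDiffOn ℝ 2 g U)
    (lam : EuclideanSpace ℝ (Fin n) → ℝ)
    (hlam : ∀ x ∈ U, ∀ z : EuclideanSpace ℝ (Fin n), fderiv ℝ g x z = lam x • z) :
    ∃ lam₀ : ℝ, (∀ x ∈ U, lam x = lam₀) ∧
      ∃ c : EuclideanSpace ℝ (Fin n), ∀ x ∈ U, g x = lam₀ • x + c := by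
  have hE : 1 < Module.rank ℝ (EuclideanSpace ℝ (Fin n)) :=
    Module.one_lt_rank_of_one_lt_finrank (by rw [finrank_euclideanSpace_fin]; omega)
  have : Nontrivial (EuclideanSpace ℝ (Fin n)) := rank_pos_iff_nontrivial.1 (zero_lt_one.trans hE)
  have hgd : DifferentiableOn ℝ g U := hg.differentiableOn two_ne_zero
  have hDg : ∀ y ∈ U, fderiv ℝ g y = lam y • ContinuousLinearMap.id ℝ _ :=
    fun y hy ↦ ContinuousLinearMap.ext (hlam y hy)
  have hDgd : DifferentiableOn ℝ (fun y ↦ lam y • ContinuousLinearMap.id ℝ _) U :=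
    ((hg.fderiv_of_isOpen hU_open le_rfl).differentiableOn one_ne_zero).congr
      fun y hy ↦ (hDg y hy).symm
  have hlamd : DifferentiableOn ℝ lam U := fun x hx ↦
    ((hDgd x hx).differentiableAt (hU_open.mem_nhds hx)).of_smul_id.differentiableWithinAt
  have hgD : ∀ y ∈ U, HasFDerivAt g (lam y • ContinuousLinearMap.id ℝ _) y := fun y hy ↦
    hDg y hy ▸ (hgd.differentiableAt (hU_open.mem_nhds hy)).hasFDerivAt
  have hlam0 : U.EqOn (fderiv ℝ lam) 0 := fun x hx ↦
    fderiv_eq_zero_of_hasFDerivAt_smul_id hE (eventually_of_mem (hU_open.mem_nhds hx) hgD)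
      ((hlamd x hx).differentiableAt (hU_open.mem_nhds hx))
  obtain ⟨lam₀, hlam₀⟩ :=
    hU_open.exists_is_const_of_fderiv_eq_zero hU_conn.isPreconnected hlamd hlam0
  obtain ⟨c, hc⟩ := hU_open.exists_eq_add_of_fderiv_eq hU_conn.isPreconnected hgd
    (differentiableOn_id.const_smul lam₀) fun x hx ↦ by
      rw [hDg x hx, fderiv_const_smul differentiableAt_id, fderiv_id, ← hlam₀ x hx]
  exact ⟨lam₀, hlam₀, c, hc⟩
end
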